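/- arXiv:1501.07202 — 3 statements merged into one kernel-verified Lean document; each statement's English description precedes it below -/
import Mathlib

section
/- Let H be Hermitian, ρ₀ = ψ₀ψ₀† with ψ₀ a unit vector, and κ skew-Hermitian. Suppose H_H(t) satisfies the modified Heisenberg equation d/dt H_H = [H_H, {1 - 2ρ₀, κ(t)}]. Then the total energy ⟨ρ₀ | H_H(t)⟩ = Tr(ρ₀ H_H(t)) is conserved: its time derivative vanishes. -/
/-!
Since `ρ₀` is idempotent, `ρ₀ (1 - 2ρ₀) = -ρ₀ = (1 - 2ρ₀) ρ₀`, and hence `ρ₀` commutes with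
`X = {1 - 2ρ₀, κ}` for every `κ`: both `ρ₀ X` and `X ρ₀` equal `-2 ρ₀ κ ρ₀`. The derivative of the
energy is `Tr(ρ₀ [H, X]) = Tr(ρ₀ H X) - Tr(X ρ₀ H)`, which vanishes by cyclicity of the trace.
-/

open Matrix

theorem Matrix.isIdempotentElem_vecMulVec {n α : Type*} [Fintype n] [Semiring α] {u v : n → α}
    (h : v ⬝ᵥ u = 1) : IsIdempotentElem (vecMulVec u v) := by
  rw [IsIdempotentElem, vecMulVec_mul_vecMulVec, h, one_smul]

theorem IsIdempotentElem.commute_anticommutator_one_sub_two_mul {R : Type*} [Ring R] {P : R}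
    (hP : IsIdempotentElem P) (K : R) :
    Commute P ((1 - 2 * P) * K + K * (1 - 2 * P)) := by
  have hP' : P * P = P := hP
  calc P * ((1 - 2 * P) * K + K * (1 - 2 * P))
      = -2 * (P * K * P) + 2 * (P * K - (P * P) * K) := by noncomm_ring
    _ = -2 * (P * K * P) + 2 * (K * P - K * (P * P)) := by rw [hP']; noncomm_ring
    _ = ((1 - 2 * P) * K + K * (1 - 2 * P)) * P := by noncomm_ring

theorem Matrix.trace_mul_commutator_eq_zero_of_commute {n R : Type*} [Fintype n] [CommRing R]
    {P X : Matrix n n R} (hPX : Commute P X) (H : Matrix n n R) :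
    (P * (H * X - X * H)).trace = 0 := by
  have : P * (H * X - X * H) = P * H * X - X * (P * H) := by
    rw [mul_sub, ← mul_assoc, ← mul_assoc, hPX.eq, mul_assoc X]
  rw [this, trace_sub, trace_mul_comm X, sub_self]

theorem Matrix.hasDerivAt_trace_mul_of_hasDerivAt_apply {n 𝕜 𝔸 : Type*} [Fintype n]
    [NontriviallyNormedField 𝕜] [NormedCommRing 𝔸] [NormedAlgebra 𝕜 𝔸] (A : Matrix n n 𝔸)
    {M : 𝕜 → Matrix n n 𝔸} {M' : Matrix n n 𝔸} {t : 𝕜}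
    (hM : ∀ i j, HasDerivAt (fun s => M s i j) (M' i j) t) :
    HasDerivAt (fun s => (A * M s).trace) (A * M').trace t := by
  simp only [trace, diag, mul_apply]
  exact HasDerivAt.fun_sum fun i _ => HasDerivAt.fun_sum fun j _ => (hM j i).const_mul _

theorem stmt_3_general {n : ℕ} (ψ₀ : Fin n → ℂ) (hψ : star ψ₀ ⬝ᵥ ψ₀ = 1)
    (HH κ : ℝ → Matrix (Fin n) (Fin n) ℂ)
    (hder : ∀ t i j, HasDerivAt (fun s => HH s i j)
      ((HH t * ((1 - (2 : ℂ) • vecMulVec ψ₀ (star ψ₀)) * κ t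
          + κ t * (1 - (2 : ℂ) • vecMulVec ψ₀ (star ψ₀)))
        - ((1 - (2 : ℂ) • vecMulVec ψ₀ (star ψ₀)) * κ t
          + κ t * (1 - (2 : ℂ) • vecMulVec ψ₀ (star ψ₀))) * HH t) i j) t) :
    ∀ t, HasDerivAt (fun s => (vecMulVec ψ₀ (star ψ₀) * HH s).trace) 0 t := by
  intro t
  have hcomm := (isIdempotentElem_vecMulVec hψ).commute_anticommutator_one_sub_two_mul (κ t)
  rw [two_mul, ← two_smul ℂ] at hcomm
  have hderiv := hasDerivAt_trace_mul_of_hasDerivAt_apply (vecMulVec ψ₀ (star ψ₀)) (hder t)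
  rwa [trace_mul_commutator_eq_zero_of_commute hcomm] at hderiv

/-- If `H_H(t)` solves the modified Heisenberg equation
`d/dt H_H = [H_H, {1 - 2ρ₀, κ(t)}]` (ρ₀ = ψ₀ψ₀† a rank-one projection, κ(t) skew-Hermitian,
H_H(t) Hermitian), then the total energy `Tr(ρ₀ H_H(t))` is conserved. -/
theorem stmt_3 {n : ℕ} (ψ₀ : Fin n → ℂ) (hψ : star ψ₀ ⬝ᵥ ψ₀ = 1)
    (HH κ : ℝ → Matrix (Fin n) (Fin n) ℂ)
    (hHerm : ∀ t, (HH t)ᴴ = HH t) (hκ : ∀ t, (κ t)ᴴ = -(κ t))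
    (hder : ∀ t i j, HasDerivAt (fun s => HH s i j)
      ((HH t * ((1 - (2 : ℂ) • vecMulVec ψ₀ (star ψ₀)) * κ t
          + κ t * (1 - (2 : ℂ) • vecMulVec ψ₀ (star ψ₀)))
        - ((1 - (2 : ℂ) • vecMulVec ψ₀ (star ψ₀)) * κ t
          + κ t * (1 - (2 : ℂ) • vecMulVec ψ₀ (star ψ₀))) * HH t) i j) t) :
    ∀ t, HasDerivAt (fun s => (vecMulVec ψ₀ (star ψ₀) * HH s).trace) 0 t :=
  stmt_3_general ψ₀ hψ HH κ hder
end

section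
/- Consider the extended Ehrenfest system ż = 𝕁 ∇_z ⟨ρ|H(z)⟩ − i ⟨Z | [H(z), ρ]⟩ (with ℏ=1), i ρ̇ = [H(z), ρ] + ∇_z⟨ρ|H(z)⟩ · [Z, ρ], where Z = (Z₁,…,Z_{2n}) is a fixed tuple of Hermitian matrices. Then the total energy Tr(ρ(t) H(z(t))) is conserved along solutions. -/
/-!
Write `b = ∇_z⟨ρ|H⟩` and `C = [H, ρ]`. The energy rate is `Tr(ρ̇ H) + ż · b`. By cyclicity of the
trace, `Tr(C H) = 0` and `Tr([Z_k, ρ] H) = -Tr(Z_k C)`, so `Tr(ρ̇ H) = i Σ_k b_k Tr(Z_k C)`. Since `𝕁`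
is skew, `b · 𝕁 b = 0`, so `ż · b = -i Σ_k b_k Tr(Z_k C)`, and the two contributions cancel.
Hermiticity makes `b_k` and `i Tr(Z_k C)` real, so the real parts in the equations of motion drop.
-/

open Matrix

namespace Matrix

variable {ι : Type*} [Fintype ι]

theorem hasDerivAt_trace_mul {𝕜 𝔸 : Type*} [NontriviallyNormedField 𝕜] [NormedCommRing 𝔸]
    [NormedAlgebra 𝕜 𝔸] {A B : 𝕜 → Matrix ι ι 𝔸} {A' B' : Matrix ι ι 𝔸} {t : 𝕜}
    (hA : ∀ i j, HasDerivAt (fun s => A s i j) (A' i j) t)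
    (hB : ∀ i j, HasDerivAt (fun s => B s i j) (B' i j) t) :
    HasDerivAt (fun s => (A s * B s).trace) ((A' * B t).trace + (A t * B').trace) t := by
  simp only [trace, diag, mul_apply, ← Finset.sum_add_distrib]
  exact HasDerivAt.fun_sum fun i _ => HasDerivAt.fun_sum fun j _ => (hA i j).mul (hB j i)

theorem trace_commutator_mul_left_self {R : Type*} [CommRing R] (X Y : Matrix ι ι R) :
    ((X * Y - Y * X) * X).trace = 0 := by
  rw [sub_mul, trace_sub, trace_mul_cycle Y X X, mul_assoc, sub_self]

theorem trace_commutator_mul {R : Type*} [CommRing R] (X Y W : Matrix ι ι R) :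
    ((X * Y - Y * X) * W).trace = (X * (Y * W - W * Y)).trace := by
  rw [sub_mul, mul_sub, trace_sub, trace_sub, mul_assoc, mul_assoc, trace_mul_comm Y, mul_assoc]

theorem dotProduct_mulVec_self_eq_zero {R : Type*} [CommRing R] [IsAddTorsionFree R]
    {J : Matrix ι ι R} (hJ : Jᵀ = -J) (v : ι → R) : v ⬝ᵥ J *ᵥ v = 0 := by
  rw [← self_eq_neg]
  conv_lhs =>
    rw [dotProduct_mulVec, ← mulVec_transpose, hJ, neg_mulVec, neg_dotProduct, dotProduct_comm]

theorem IsHermitian.ofReal_re_trace_mul {𝕜 : Type*} [RCLike 𝕜] {A B : Matrix ι ι 𝕜}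
    (hA : A.IsHermitian) (hB : B.IsHermitian) :
    (RCLike.re (A * B).trace : 𝕜) = (A * B).trace := by
  rw [← RCLike.conj_eq_iff_re, ← RCLike.star_def, ← trace_conjTranspose, conjTranspose_mul,
    hA.eq, hB.eq, trace_mul_comm]

theorem IsHermitian.I_smul_commutator {A B : Matrix ι ι ℂ} (hA : A.IsHermitian)
    (hB : B.IsHermitian) : (Complex.I • (A * B - B * A)).IsHermitian := by
  rw [IsHermitian, conjTranspose_smul, conjTranspose_sub, conjTranspose_mul, conjTranspose_mul,
    hA.eq, hB.eq, Complex.star_def, Complex.conj_I, neg_smul, ← smul_neg, neg_sub]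

end Matrix

open Complex in
theorem ehrenfest_energy_rate_eq_zero {ι κ : Type*} [Fintype ι] [Fintype κ]
    {J : Matrix κ κ ℝ} (hJ : Jᵀ = -J) {Z D : κ → Matrix ι ι ℂ}
    (hZ : ∀ k, (Z k).IsHermitian) (hD : ∀ k, (D k).IsHermitian) {A B P : Matrix ι ι ℂ}
    (hA : A.IsHermitian) (hB : B.IsHermitian) {v : κ → ℝ}
    (hv : ∀ k, v k = J.mulVec (fun l => ((A * D l).trace).re) k
      - (I * (Z k * (B * A - A * B)).trace).re)
    (hP : I • P = (B * A - A * B)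
      + ∑ k, (((A * D k).trace.re : ℂ)) • (Z k * A - A * Z k)) :
    (P * B).trace + (A * ∑ k, (v k : ℂ) • D k).trace = 0 := by
  set b : κ → ℝ := fun l => ((A * D l).trace).re
  set C := B * A - A * B
  have hb (k : κ) : (b k : ℂ) = (A * D k).trace := hA.ofReal_re_trace_mul (hD k)
  have hc (k : κ) : ((I * (Z k * C).trace).re : ℂ) = I * (Z k * C).trace := by
    have h := (hZ k).ofReal_re_trace_mul (hB.I_smul_commutator hA)
    rwa [mul_smul_comm, trace_smul, smul_eq_mul] at h
  have quantum : (P * B).trace = I * ∑ k, (b k : ℂ) * (Z k * C).trace := by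
    have hPB : (P * B).trace = -I * ((I • P) * B).trace := by
      rw [smul_mul, trace_smul, smul_eq_mul, ← mul_assoc, neg_mul, I_mul_I, neg_neg, one_mul]
    rw [hPB, hP, add_mul, trace_add, trace_commutator_mul_left_self, Finset.sum_mul, trace_sum]
    simp only [smul_mul, trace_smul, trace_commutator_mul, smul_eq_mul]
    simp only [← neg_sub (B * A), mul_neg, trace_neg, zero_add, Finset.mul_sum]
    exact Finset.sum_congr rfl fun k _ => by ring
  have classical : (A * ∑ k, (v k : ℂ) • D k).trace
      = -(I * ∑ k, (b k : ℂ) * (Z k * C).trace) := by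
    have hJb : ∑ k, ((J *ᵥ b) k : ℂ) * b k = 0 := by
      exact_mod_cast (dotProduct_comm _ _).trans (dotProduct_mulVec_self_eq_zero hJ b)
    simp only [trace_sum, mul_smul_comm, trace_smul, smul_eq_mul, ← hb, hv,
      ofReal_sub, hc, sub_mul, Finset.sum_sub_distrib, hJb, Finset.mul_sum]
    rw [zero_sub]
    exact congrArg Neg.neg (Finset.sum_congr rfl fun k _ => by ring)
  rw [quantum, classical, add_neg_cancel]

theorem stmt_14_general {n m : ℕ}
    (J : Matrix (Fin (2 * n)) (Fin (2 * n)) ℝ) (hJ : Jᵀ = -J)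
    (Z : Fin (2 * n) → Matrix (Fin m) (Fin m) ℂ) (hZ : ∀ k, (Z k)ᴴ = Z k)
    (H : (Fin (2 * n) → ℝ) → Matrix (Fin m) (Fin m) ℂ)
    (Hd : (Fin (2 * n) → ℝ) → Fin (2 * n) → Matrix (Fin m) (Fin m) ℂ)
    (hHerm : ∀ w, (H w)ᴴ = H w) (hHdHerm : ∀ w k, (Hd w k)ᴴ = Hd w k)
    (z z' : ℝ → Fin (2 * n) → ℝ) (ρ ρ' : ℝ → Matrix (Fin m) (Fin m) ℂ)
    (hρHerm : ∀ t, (ρ t)ᴴ = ρ t)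
    (hρ : ∀ t i j, HasDerivAt (fun s => ρ s i j) (ρ' t i j) t)
    (hchain : ∀ t i j, HasDerivAt (fun s => H (z s) i j)
      (∑ k, (z' t k : ℂ) * Hd (z t) k i j) t)
    (heqz : ∀ t k, z' t k =
      J.mulVec (fun l => ((ρ t * Hd (z t) l).trace).re) k
        - (Complex.I * (Z k * (H (z t) * ρ t - ρ t * H (z t))).trace).re)
    (heqρ : ∀ t, Complex.I • ρ' t =
      (H (z t) * ρ t - ρ t * H (z t))
        + ∑ k, ((((ρ t * Hd (z t) k).trace).re : ℂ)) • (Z k * ρ t - ρ t * Z k)) :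
    ∀ t, HasDerivAt (fun s => (ρ s * H (z s)).trace) 0 t := by
  intro t
  have hHz (i j : Fin m) : HasDerivAt (fun s => H (z s) i j)
      ((∑ k, (z' t k : ℂ) • Hd (z t) k) i j) t := by
    simpa only [Matrix.sum_apply, Matrix.smul_apply, smul_eq_mul] using hchain t i j
  have hE := hasDerivAt_trace_mul (hρ t) hHz
  rwa [ehrenfest_energy_rate_eq_zero hJ hZ (hHdHerm (z t)) (hρHerm t) (hHerm (z t))
    (heqz t) (heqρ t)] at hE

/-- Along solutions of the extended Ehrenfest system (ℏ = 1)
`ż = 𝕁∇_z⟨ρ|H(z)⟩ − i⟨Z|[H(z),ρ]⟩`,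
`iρ̇ = [H(z),ρ] + ∇_z⟨ρ|H(z)⟩ · [Z,ρ]`,
with Z a fixed tuple of Hermitian matrices, the total energy `Tr(ρ(t) H(z(t)))`
is conserved. -/
theorem stmt_14 {n m : ℕ}
    (J : Matrix (Fin (2 * n)) (Fin (2 * n)) ℝ) (hJ : Jᵀ = -J)
    (Z : Fin (2 * n) → Matrix (Fin m) (Fin m) ℂ) (hZ : ∀ k, (Z k)ᴴ = Z k)
    (H : (Fin (2 * n) → ℝ) → Matrix (Fin m) (Fin m) ℂ)
    (Hd : (Fin (2 * n) → ℝ) → Fin (2 * n) → Matrix (Fin m) (Fin m) ℂ)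
    (hHerm : ∀ w, (H w)ᴴ = H w) (hHdHerm : ∀ w k, (Hd w k)ᴴ = Hd w k)
    (z z' : ℝ → Fin (2 * n) → ℝ) (ρ ρ' : ℝ → Matrix (Fin m) (Fin m) ℂ)
    (hρHerm : ∀ t, (ρ t)ᴴ = ρ t)
    (hz : ∀ t k, HasDerivAt (fun s => z s k) (z' t k) t)
    (hρ : ∀ t i j, HasDerivAt (fun s => ρ s i j) (ρ' t i j) t)
    (hchain : ∀ t i j, HasDerivAt (fun s => H (z s) i j)
      (∑ k, (z' t k : ℂ) * Hd (z t) k i j) t)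
    (heqz : ∀ t k, z' t k =
      J.mulVec (fun l => ((ρ t * Hd (z t) l).trace).re) k
        - (Complex.I * (Z k * (H (z t) * ρ t - ρ t * H (z t))).trace).re)
    (heqρ : ∀ t, Complex.I • ρ' t =
      (H (z t) * ρ t - ρ t * H (z t))
        + ∑ k, ((((ρ t * Hd (z t) k).trace).re : ℂ)) • (Z k * ρ t - ρ t * Z k)) :
    ∀ t, HasDerivAt (fun s => (ρ s * H (z s)).trace) 0 t :=
  stmt_14_general J hJ Z hZ H Hd hHerm hHdHerm z z' ρ ρ' hρHerm hρ hchain heqz heqρ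
end

section
/- Let U(t) be a curve of unitary matrices solving the propagator equation U̇ = −iℏ⁻¹ H U + U{1 − 2ρ₀, κ(t)} with H Hermitian, κ(t) skew-Hermitian, ρ₀ = ψ₀ψ₀†, ‖ψ₀‖ = 1. Then ψ(t) := U(t)ψ₀ solves iℏψ̇ = Hψ − 2iℏ(ψ₀†κ(t)ψ₀)ψ, and since κ(t) is skew-Hermitian, ψ₀†κ(t)ψ₀ is purely imaginary, so the extra term is a real multiple of ψ (a pure phase term). -/
open Matrix

lemma vecMulVec_mulVec' {n : ℕ} (w v x : Fin n → ℂ) :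
    (vecMulVec w v).mulVec x = (v ⬝ᵥ x) • w := by
  funext i
  simp [mulVec, vecMulVec, dotProduct, Finset.mul_sum, mul_comm, mul_left_comm]

lemma key_vec {n : ℕ} (ψ₀ : Fin n → ℂ) (hψ : star ψ₀ ⬝ᵥ ψ₀ = 1)
    (A : Matrix (Fin n) (Fin n) ℂ) :
    (((1 - (2 : ℂ) • vecMulVec ψ₀ (star ψ₀)) * A
        + A * (1 - (2 : ℂ) • vecMulVec ψ₀ (star ψ₀)))).mulVec ψ₀
      = (-2 * (star ψ₀ ⬝ᵥ A.mulVec ψ₀)) • ψ₀ := by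
  have hρ : (vecMulVec ψ₀ (star ψ₀)).mulVec ψ₀ = ψ₀ := by
    rw [vecMulVec_mulVec', hψ, one_smul]
  rw [add_mulVec, ← mulVec_mulVec, ← mulVec_mulVec, sub_mulVec, sub_mulVec,
    smul_mulVec, smul_mulVec, one_mulVec, one_mulVec, hρ]
  have : A.mulVec (ψ₀ - (2 : ℂ) • ψ₀) = -(A.mulVec ψ₀) := by
    rw [mulVec_sub, mulVec_smul]; module
  rw [this, vecMulVec_mulVec']
  module

/-- If the unitary propagator U(t) solves
`U̇ = −iℏ⁻¹HU + U{1 − 2ρ₀, κ(t)}` (H Hermitian, κ(t) skew-Hermitian, ρ₀ = ψ₀ψ₀†,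
ψ₀ a unit vector), then `ψ(t) = U(t)ψ₀` solves `iℏψ̇ = Hψ + α(t)ψ` with
`α(t) = −2iℏ(ψ₀†κ(t)ψ₀)` a real scalar (a pure phase term). -/
theorem stmt_19 {n : ℕ} (ℏ : ℝ) (hℏ : ℏ ≠ 0)
    (ψ₀ : Fin n → ℂ) (hψ : star ψ₀ ⬝ᵥ ψ₀ = 1)
    (H : Matrix (Fin n) (Fin n) ℂ) (hH : Hᴴ = H)
    (κ : ℝ → Matrix (Fin n) (Fin n) ℂ) (hκ : ∀ t, (κ t)ᴴ = -(κ t))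
    (U U' : ℝ → Matrix (Fin n) (Fin n) ℂ)
    (hU : ∀ t, U t ∈ Matrix.unitaryGroup (Fin n) ℂ)
    (hU' : ∀ t i j, HasDerivAt (fun s => U s i j) (U' t i j) t)
    (heq : ∀ t, U' t = ((-Complex.I) * (ℏ : ℂ)⁻¹) • (H * U t)
      + U t * ((1 - (2 : ℂ) • vecMulVec ψ₀ (star ψ₀)) * κ t
          + κ t * (1 - (2 : ℂ) • vecMulVec ψ₀ (star ψ₀)))) :
    ∀ t, (∀ i, HasDerivAt (fun s => (Complex.I * (ℏ : ℂ)) * ((U s).mulVec ψ₀ i))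
        ((H.mulVec ((U t).mulVec ψ₀)
          + (-(2 * Complex.I * (ℏ : ℂ) * (star ψ₀ ⬝ᵥ (κ t).mulVec ψ₀)))
            • ((U t).mulVec ψ₀)) i) t) ∧
      (-(2 * Complex.I * (ℏ : ℂ) * (star ψ₀ ⬝ᵥ (κ t).mulVec ψ₀))).im = 0 := by
  intro t
  set c : ℂ := star ψ₀ ⬝ᵥ (κ t).mulVec ψ₀ with hc
  have hℏc : (ℏ : ℂ) ≠ 0 := Complex.ofReal_ne_zero.mpr hℏ
  have hder : (U' t).mulVec ψ₀ = ((-Complex.I) * (ℏ : ℂ)⁻¹) • H.mulVec ((U t).mulVec ψ₀)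
      + (-2 * c) • (U t).mulVec ψ₀ := by
    rw [heq t, add_mulVec, smul_mulVec, ← mulVec_mulVec, ← mulVec_mulVec,
      key_vec ψ₀ hψ (κ t), mulVec_smul, hc]
  constructor
  · intro i
    have h1 : HasDerivAt (fun s => (Complex.I * (ℏ : ℂ)) * ∑ j, U s i j * ψ₀ j)
        ((Complex.I * (ℏ : ℂ)) * ∑ j, U' t i j * ψ₀ j) t :=
      (HasDerivAt.fun_sum fun j _ => (hU' t i j).mul_const (ψ₀ j)).const_mul _
    have h2 : (Complex.I * (ℏ : ℂ)) * ∑ j, U' t i j * ψ₀ j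
        = (H.mulVec ((U t).mulVec ψ₀)
          + (-(2 * Complex.I * (ℏ : ℂ) * c)) • ((U t).mulVec ψ₀)) i := by
      have : (∑ j, U' t i j * ψ₀ j) = (U' t).mulVec ψ₀ i := rfl
      rw [this, hder]
      simp only [Pi.add_apply, Pi.smul_apply, smul_eq_mul]
      field_simp
      ring_nf
      simp only [Complex.I_sq]
      ring
    rw [h2] at h1
    exact h1
  · have hstar : star c = -c := by
      rw [hc, ← star_dotProduct, star_mulVec, hκ t,
        ← dotProduct_mulVec, neg_mulVec, dotProduct_neg]
    have hre : c.re = 0 := by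
      have := congrArg Complex.re hstar
      simp at this
      linarith
    simp [Complex.mul_im, Complex.mul_re, hre]
end
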